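/- arXiv:1604.08793 — 9 statements merged into one kernel-verified Lean document; each statement's English description precedes it below -/
import Mathlib

section
/- (Swapping lemma instance.) Let λ > 0 and let V, I, w, z, r : ℝ → ℝ be differentiable functions satisfying, for all t ≥ 0: w′(t) = λ·(V′(t) − w(t)), z′(t) = λ·(V′(t)·I(t) − z(t)), r′(t) = I′(t)·w(t) − λ·r(t), together with the initial condition z(0) = I(0)·w(0) − r(0). Then z(t) = I(t)·w(t) − r(t) for all t ≥ 0. -/
/-! The defect `z - (I w - r)` satisfies the scalar linear ODE `e' = -λ e`: in its derivative the
`λ V' I` terms coming from `z'` and from `I w'` cancel, and the `I' w` terms from `(I w)'` and `r'`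
cancel. A solution of a linear ODE vanishing at `0` vanishes identically (uniqueness for
Lipschitz ODEs). -/

open Set

theorem eq_zero_of_hasDerivAt_eq_smul {E : Type*} [NormedAddCommGroup E] [NormedSpace ℝ E]
    {c : ℝ} {e : ℝ → E} (he : ∀ t ≥ (0:ℝ), HasDerivAt e (c • e t) t) (h0 : e 0 = 0) :
    ∀ t ≥ (0:ℝ), e t = 0 := by
  intro t ht
  have hcont : ContinuousOn e (Icc 0 t) := fun s hs => (he s hs.1).continuousAt.continuousWithinAt
  refine ODE_solution_unique_of_mem_Icc_right (v := fun _ x => c • x) (s := fun _ => univ)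
    (fun _ _ => (lipschitzWith_smul c).lipschitzOnWith) hcont
    (fun s hs => (he s hs.1).hasDerivWithinAt) (fun _ _ => trivial) continuousOn_const
    (fun _ _ => by simpa using hasDerivWithinAt_const _ _ (0 : E)) (fun _ _ => trivial) h0
    ⟨ht, le_rfl⟩

theorem hasDerivAt_swapping_defect {lam : ℝ} {V I w z r : ℝ → ℝ} {t : ℝ}
    (hI : DifferentiableAt ℝ I t) (hw : DifferentiableAt ℝ w t) (hz : DifferentiableAt ℝ z t)
    (hr : DifferentiableAt ℝ r t)
    (hw' : deriv w t = lam * (deriv V t - w t))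
    (hz' : deriv z t = lam * (deriv V t * I t - z t))
    (hr' : deriv r t = deriv I t * w t - lam * r t) :
    HasDerivAt (fun s => z s - (I s * w s - r s)) (-lam * (z t - (I t * w t - r t))) t := by
  refine (hz.hasDerivAt.sub ((hI.hasDerivAt.mul hw.hasDerivAt).sub hr.hasDerivAt)).congr_deriv ?_
  rw [hz', hw', hr']
  ring

theorem swapping_lemma_instance_general
    (lam : ℝ)
    (V I w z r : ℝ → ℝ)
    (hI : Differentiable ℝ I)
    (hw : Differentiable ℝ w) (hz : Differentiable ℝ z)
    (hr : Differentiable ℝ r)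
    (hw' : ∀ t ≥ (0:ℝ), deriv w t = lam * (deriv V t - w t))
    (hz' : ∀ t ≥ (0:ℝ), deriv z t = lam * (deriv V t * I t - z t))
    (hr' : ∀ t ≥ (0:ℝ), deriv r t = deriv I t * w t - lam * r t)
    (h0 : z 0 = I 0 * w 0 - r 0) :
    ∀ t ≥ (0:ℝ), z t = I t * w t - r t := by
  have hdefect : ∀ t ≥ (0:ℝ), z t - (I t * w t - r t) = 0 :=
    eq_zero_of_hasDerivAt_eq_smul (c := -lam)
      (fun t ht => hasDerivAt_swapping_defect (hI t) (hw t) (hz t) (hr t)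
        (hw' t ht) (hz' t ht) (hr' t ht))
      (sub_eq_zero.mpr h0)
  exact fun t ht => sub_eq_zero.mp (hdefect t ht)

theorem swapping_lemma_instance
    (lam : ℝ) (hlam : 0 < lam)
    (V I w z r : ℝ → ℝ)
    (hV : Differentiable ℝ V) (hI : Differentiable ℝ I)
    (hw : Differentiable ℝ w) (hz : Differentiable ℝ z)
    (hr : Differentiable ℝ r)
    (hw' : ∀ t ≥ (0:ℝ), deriv w t = lam * (deriv V t - w t))
    (hz' : ∀ t ≥ (0:ℝ), deriv z t = lam * (deriv V t * I t - z t))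
    (hr' : ∀ t ≥ (0:ℝ), deriv r t = deriv I t * w t - lam * r t)
    (h0 : z 0 = I 0 * w 0 - r 0) :
    ∀ t ≥ (0:ℝ), z t = I t * w t - r t :=
  swapping_lemma_instance_general lam V I w z r hI hw hz hr hw' hz' hr' h0
end

section
/- Let γ > 0, let Δ : ℝ → ℝ be continuous, and let x : ℝ → ℝ be differentiable with x′(t) = −γ·Δ(t)²·x(t) for all t ≥ 0, and suppose x(0) ≠ 0. Then x(t) → 0 as t → ∞ if and only if ∫₀^∞ Δ(s)² ds = ∞ (i.e., if and only if Δ restricted to [0, ∞) is not square-integrable). -/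
/-!
Multiplying by the integrating factor `exp (γ ∫₀ᵗ Δ²)` shows that the solution is
`x t = x 0 * exp (-γ ∫₀ᵗ Δ²)`. Since `x 0 ≠ 0`, it tends to `0` exactly when the nondecreasing
function `t ↦ ∫₀ᵗ Δ²` is unbounded, that is, when `Δ²` is not integrable on `[0, ∞)`.
-/

open Filter MeasureTheory Set

section IntegralOfNonneg

variable {f : ℝ → ℝ}

lemma MeasureTheory.LocallyIntegrable.intervalIntegrable (hfi : LocallyIntegrable f) (a b : ℝ) :
    IntervalIntegrable f volume a b :=
  (hfi.integrableOn_isCompact isCompact_uIcc).intervalIntegrable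

lemma monotone_intervalIntegral_of_nonneg (hf : 0 ≤ f) (hfi : LocallyIntegrable f) (a : ℝ) :
    Monotone fun t => ∫ s in a..t, f s := by
  intro b c hbc
  have hdiff := intervalIntegral.integral_interval_sub_left
    (hfi.intervalIntegrable a c) (hfi.intervalIntegrable a b)
  have hnonneg : 0 ≤ ∫ s in b..c, f s := intervalIntegral.integral_nonneg hbc fun s _ => hf s
  linarith

lemma tendsto_intervalIntegral_atTop_atTop_iff_not_integrableOn_Ioi (hf : 0 ≤ f)
    (hfi : LocallyIntegrable f) (a : ℝ) :
    Tendsto (fun t => ∫ s in a..t, f s) atTop atTop ↔ ¬ IntegrableOn f (Ioi a) := by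
  constructor
  · intro htop hint
    exact not_tendsto_nhds_of_tendsto_atTop htop _
      (intervalIntegral_tendsto_integral_Ioi a hint tendsto_id)
  · intro hint
    rw [tendsto_atTop_atTop_iff_of_monotone (monotone_intervalIntegral_of_nonneg hf hfi a)]
    by_contra! hbdd
    obtain ⟨C, hC⟩ := hbdd
    refine hint (integrableOn_Ioi_of_intervalIntegral_norm_bounded C a
      (fun i => (hfi.intervalIntegrable a i).1) tendsto_id (Eventually.of_forall fun t => ?_))
    simpa only [Real.norm_of_nonneg (hf _), id] using (hC t).le

lemma setLIntegral_ofReal_Ici_eq_top_iff_not_integrableOn_Ioi (hf : 0 ≤ f)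
    (hfi : LocallyIntegrable f) (a : ℝ) :
    ∫⁻ s in Ici a, ENNReal.ofReal (f s) = ⊤ ↔ ¬ IntegrableOn f (Ioi a) := by
  rw [← integrableOn_Ici_iff_integrableOn_Ioi, IntegrableOn,
    ← lintegral_ofReal_ne_top_iff_integrable hfi.aestronglyMeasurable.restrict
      (ae_of_all _ hf), not_not]

end IntegralOfNonneg

lemma eq_mul_exp_neg_intervalIntegral_of_deriv_eq_neg_mul {x a : ℝ → ℝ}
    (hx : Differentiable ℝ x) (ha : Continuous a)
    (hx' : ∀ t ≥ (0 : ℝ), deriv x t = -a t * x t) {t : ℝ} (ht : 0 ≤ t) :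
    x t = x 0 * Real.exp (-∫ s in (0 : ℝ)..t, a s) := by
  set A : ℝ → ℝ := fun u => ∫ s in (0 : ℝ)..u, a s
  have hA : ∀ u, HasDerivAt A (a u) u := fun u => ha.integral_hasStrictDerivAt 0 u |>.hasDerivAt
  have hconst : ∀ u ∈ Icc 0 t, x u * Real.exp (A u) = x 0 * Real.exp (A 0) := by
    refine constant_of_has_deriv_right_zero ?_ (fun u hu => ?_)
    · have hAc : Continuous A := continuous_iff_continuousAt.2 fun u => (hA u).continuousAt
      exact (hx.continuous.mul (Real.continuous_exp.comp hAc)).continuousOn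
    · have hxu : HasDerivAt x (-a u * x u) u := hx' u hu.1 ▸ (hx u).hasDerivAt
      have hzero : -a u * x u * Real.exp (A u) + x u * (Real.exp (A u) * a u) = 0 := by ring
      exact (hzero ▸ hxu.mul (hA u).exp).hasDerivWithinAt
  have hA0 : A 0 = 0 := intervalIntegral.integral_same
  have hxt := hconst t ⟨ht, le_rfl⟩
  rw [hA0, Real.exp_zero, mul_one] at hxt
  rw [← hxt, Real.exp_neg, mul_inv_cancel_right₀ (Real.exp_pos _).ne']

lemma tendsto_mul_exp_neg_nhds_zero_iff {α : Type*} {l : Filter α} {g : α → ℝ} {c : ℝ}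
    (hc : c ≠ 0) :
    Tendsto (fun t => c * Real.exp (-g t)) l (nhds 0) ↔ Tendsto g l atTop := by
  rw [← tendsto_neg_atBot_iff, ← Real.tendsto_exp_comp_nhds_zero]
  constructor
  · intro h
    simpa [inv_mul_cancel_left₀ hc] using h.const_mul c⁻¹
  · intro h
    simpa using h.const_mul c

theorem drem_convergence_iff_not_square_integrable
    (γ : ℝ) (hγ : 0 < γ)
    (Δ : ℝ → ℝ) (hΔ : Continuous Δ)
    (x : ℝ → ℝ) (hx : Differentiable ℝ x)
    (hx' : ∀ t ≥ (0:ℝ), deriv x t = -γ * (Δ t) ^ 2 * x t)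
    (hx0 : x 0 ≠ 0) :
    Tendsto x atTop (nhds 0) ↔
      ∫⁻ s in Set.Ici (0:ℝ), ENNReal.ofReal ((Δ s) ^ 2) = ⊤ := by
  have hsq : LocallyIntegrable fun s => Δ s ^ 2 := (hΔ.pow 2).locallyIntegrable
  have hsol : x =ᶠ[atTop] fun t => x 0 * Real.exp (-(γ * ∫ s in (0 : ℝ)..t, Δ s ^ 2)) := by
    filter_upwards [eventually_ge_atTop 0] with t ht
    rw [← intervalIntegral.integral_const_mul]
    exact eq_mul_exp_neg_intervalIntegral_of_deriv_eq_neg_mul (a := fun s => γ * Δ s ^ 2) hx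
      (by fun_prop) (fun u hu => by rw [hx' u hu, neg_mul]) ht
  rw [tendsto_congr' hsol, tendsto_mul_exp_neg_nhds_zero_iff hx0,
    tendsto_const_mul_atTop_of_pos hγ,
    tendsto_intervalIntegral_atTop_atTop_iff_not_integrableOn_Ioi (fun s => sq_nonneg _) hsq,
    setLIntegral_ofReal_Ici_eq_top_iff_not_integrableOn_Ioi (fun s => sq_nonneg _) hsq]
end

section
/- Let a1, …, a5 > 0, b1 = (a1 + a2)/(1 + a4·a5), b3 = a5/(1 + a4·a5), and θ1, θ2, θ3, θ4 defined by θ1 = a3/(1 + a3·a4·b1), θ2 = (a3·b1 + b3)/(1 + a3·a4·b1), θ3 = a3·b3/(1 + a3·a4·b1), θ4 = a3·a4/(1 + a3·a4·b1). Then θ1 > 0, θ2·θ4 − θ1 ≠ 0, θ1² − θ3·θ4 ≠ 0, and the parameters can be recovered as a4 = θ4/θ1, a3 = (θ3·θ4 − θ1²)/(θ2·θ4 − θ1), and a5 = θ1·θ3/(θ1² − θ3·θ4). -/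
theorem parameter_recovery_from_theta
    (a1 a2 a3 a4 a5 b1 b3 θ1 θ2 θ3 θ4 : ℝ)
    (ha1 : 0 < a1) (ha2 : 0 < a2) (ha3 : 0 < a3) (ha4 : 0 < a4) (ha5 : 0 < a5)
    (hb1 : b1 = (a1 + a2) / (1 + a4 * a5))
    (hb3 : b3 = a5 / (1 + a4 * a5))
    (hθ1 : θ1 = a3 / (1 + a3 * a4 * b1))
    (hθ2 : θ2 = (a3 * b1 + b3) / (1 + a3 * a4 * b1))
    (hθ3 : θ3 = a3 * b3 / (1 + a3 * a4 * b1))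
    (hθ4 : θ4 = a3 * a4 / (1 + a3 * a4 * b1)) :
    0 < θ1 ∧ θ2 * θ4 - θ1 ≠ 0 ∧ θ1 ^ 2 - θ3 * θ4 ≠ 0 ∧
    a4 = θ4 / θ1 ∧
    a3 = (θ3 * θ4 - θ1 ^ 2) / (θ2 * θ4 - θ1) ∧
    a5 = θ1 * θ3 / (θ1 ^ 2 - θ3 * θ4) := by
  have hD0 : (0:ℝ) < 1 + a4 * a5 := by positivity
  have hb1p : 0 < b1 := by rw [hb1]; positivity
  have hb3p : 0 < b3 := by rw [hb3]; positivity
  have hD : (0:ℝ) < 1 + a3 * a4 * b1 := by positivity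
  have hDne : (1 + a3 * a4 * b1) ≠ 0 := ne_of_gt hD
  have hD0ne : (1 + a4 * a5) ≠ 0 := ne_of_gt hD0
  have hθ1p : 0 < θ1 := by rw [hθ1]; positivity
  have hA : θ2 * θ4 - θ1 = -(a3 / ((1 + a3 * a4 * b1)^2 * (1 + a4 * a5))) := by
    rw [hθ1, hθ2, hθ4, hb3]; field_simp; ring
  have hB : θ1 ^ 2 - θ3 * θ4 = a3 ^ 2 / ((1 + a3 * a4 * b1)^2 * (1 + a4 * a5)) := by
    rw [hθ1, hθ3, hθ4, hb3]; field_simp; ring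
  have hApos : 0 < a3 / ((1 + a3 * a4 * b1)^2 * (1 + a4 * a5)) := by positivity
  have hBpos : 0 < a3 ^ 2 / ((1 + a3 * a4 * b1)^2 * (1 + a4 * a5)) := by positivity
  refine ⟨hθ1p, by rw [hA]; exact neg_ne_zero.mpr (ne_of_gt hApos), by rw [hB]; exact ne_of_gt hBpos, ?_, ?_, ?_⟩
  · rw [hθ1, hθ4]; field_simp
  · have hB' : θ3 * θ4 - θ1 ^ 2 = -(a3 ^ 2 / ((1 + a3 * a4 * b1)^2 * (1 + a4 * a5))) := by
      linarith [hB]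
    rw [hA, hB', neg_div_neg_eq]
    rw [div_div_div_cancel_right₀]
    · field_simp
    · positivity
  · rw [hB, hθ1, hθ3, hb3]
    field_simp
end

section
/- Let a1, …, a5 > 0, b1 = (a1 + a2)/(1 + a4·a5), b3 = a5/(1 + a4·a5), and θ1, θ2, θ3, θ4 defined by θ1 = a3/(1 + a3·a4·b1), θ2 = (a3·b1 + b3)/(1 + a3·a4·b1), θ3 = a3·b3/(1 + a3·a4·b1), θ4 = a3·a4/(1 + a3·a4·b1). Suppose V, I ∈ ℝ satisfy the IV equation I = a1 − a2·(exp(a3·(V + a4·I)) − 1) − a5·(V + a4·I). Then a2 = [θ1²·I + θ1·θ3·V + θ1²·(θ1·θ2 − θ3)/(θ3·θ4 − θ1²)] · exp(((θ3·θ4 − θ1²)/(θ1 − θ2·θ4))·(V + (θ4/θ1)·I)) / (θ3·θ4 − θ1²). -/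
/-!
Writing `E = 1 + a3·a4·b1` and `c = 1 - a4·b3 = 1/(1 + a4·a5)`, one has `θ1 = a3/E`, `θ3 = b3·θ1`,
`θ4 = a4·θ1`, `θ3·θ4 - θ1² = -c·θ1²`, `θ1·θ2 - θ3 = c·b1·θ1²` and `θ1 - θ2·θ4 = c·θ1/E`.
Hence the exponent is `-a3·(V + a4·I)` and the prefactor is `(b1 - b3·V - I)/c`, which is
`a1 + a2 - a5·(V + a4·I) - I = a2·exp(a3·(V + a4·I))` by the IV equation.
-/

section ThetaIdentities

variable {a3 a4 b1 b3 θ1 θ2 θ3 θ4 : ℝ}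

lemma theta4_div_theta1 (ha3 : a3 ≠ 0) (hE : 1 + a3 * a4 * b1 ≠ 0)
    (hθ1 : θ1 = a3 / (1 + a3 * a4 * b1)) (hθ4 : θ4 = a3 * a4 / (1 + a3 * a4 * b1)) :
    θ4 / θ1 = a4 := by
  subst hθ1 hθ4
  field_simp

lemma theta_det (hθ1 : θ1 = a3 / (1 + a3 * a4 * b1))
    (hθ3 : θ3 = a3 * b3 / (1 + a3 * a4 * b1)) (hθ4 : θ4 = a3 * a4 / (1 + a3 * a4 * b1)) :
    θ3 * θ4 - θ1 ^ 2 = -((1 - a4 * b3) * θ1 ^ 2) := by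
  subst hθ1 hθ3 hθ4
  ring

lemma theta_cross (hE : 1 + a3 * a4 * b1 ≠ 0) (hθ1 : θ1 = a3 / (1 + a3 * a4 * b1))
    (hθ2 : θ2 = (a3 * b1 + b3) / (1 + a3 * a4 * b1))
    (hθ3 : θ3 = a3 * b3 / (1 + a3 * a4 * b1)) :
    θ1 * θ2 - θ3 = (1 - a4 * b3) * b1 * θ1 ^ 2 := by
  subst hθ1 hθ2 hθ3
  field_simp
  ring

lemma theta1_sub_theta2_mul_theta4 (hE : 1 + a3 * a4 * b1 ≠ 0)
    (hθ1 : θ1 = a3 / (1 + a3 * a4 * b1))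
    (hθ2 : θ2 = (a3 * b1 + b3) / (1 + a3 * a4 * b1))
    (hθ4 : θ4 = a3 * a4 / (1 + a3 * a4 * b1)) :
    θ1 - θ2 * θ4 = (1 - a4 * b3) * θ1 / (1 + a3 * a4 * b1) := by
  subst hθ1 hθ2 hθ4
  field_simp
  ring

lemma theta_exponent_ratio (ha3 : a3 ≠ 0) (hE : 1 + a3 * a4 * b1 ≠ 0) (hc : 1 - a4 * b3 ≠ 0)
    (hθ1 : θ1 = a3 / (1 + a3 * a4 * b1))
    (hθ2 : θ2 = (a3 * b1 + b3) / (1 + a3 * a4 * b1))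
    (hθ3 : θ3 = a3 * b3 / (1 + a3 * a4 * b1))
    (hθ4 : θ4 = a3 * a4 / (1 + a3 * a4 * b1)) :
    (θ3 * θ4 - θ1 ^ 2) / (θ1 - θ2 * θ4) = -a3 := by
  have hθ1_ne : θ1 ≠ 0 := hθ1 ▸ div_ne_zero ha3 hE
  rw [theta_det hθ1 hθ3 hθ4, theta1_sub_theta2_mul_theta4 hE hθ1 hθ2 hθ4]
  field_simp
  rw [hθ1]
  field_simp

lemma theta_prefactor (ha3 : a3 ≠ 0) (hE : 1 + a3 * a4 * b1 ≠ 0) (hc : 1 - a4 * b3 ≠ 0)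
    (hθ1 : θ1 = a3 / (1 + a3 * a4 * b1))
    (hθ2 : θ2 = (a3 * b1 + b3) / (1 + a3 * a4 * b1))
    (hθ3 : θ3 = a3 * b3 / (1 + a3 * a4 * b1))
    (hθ4 : θ4 = a3 * a4 / (1 + a3 * a4 * b1)) (V I : ℝ) :
    (θ1 ^ 2 * I + θ1 * θ3 * V + θ1 ^ 2 * (θ1 * θ2 - θ3) / (θ3 * θ4 - θ1 ^ 2))
      / (θ3 * θ4 - θ1 ^ 2) = (b1 - b3 * V - I) / (1 - a4 * b3) := by
  have hθ1_ne : θ1 ≠ 0 := hθ1 ▸ div_ne_zero ha3 hE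
  have hθ3' : θ3 = b3 * θ1 := by subst hθ1 hθ3; ring
  have hdet_ne : -((1 - a4 * b3) * θ1 ^ 2) ≠ 0 := by simp [hc, hθ1_ne]
  have hinner : θ1 ^ 2 * ((1 - a4 * b3) * b1 * θ1 ^ 2) / -((1 - a4 * b3) * θ1 ^ 2)
      = -(b1 * θ1 ^ 2) := by
    rw [div_eq_iff hdet_ne]; ring
  rw [theta_det hθ1 hθ3 hθ4, theta_cross hE hθ1 hθ2 hθ3, hinner, hθ3',
    div_eq_div_iff hdet_ne hc]
  ring

end ThetaIdentities

lemma one_sub_mul_div_eq {a4 a5 : ℝ} (hD : 1 + a4 * a5 ≠ 0) :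
    1 - a4 * (a5 / (1 + a4 * a5)) = 1 / (1 + a4 * a5) := by
  field_simp
  ring

lemma reduced_current_eq {a1 a2 a4 a5 : ℝ} (hD : 1 + a4 * a5 ≠ 0) (V I : ℝ) :
    ((a1 + a2) / (1 + a4 * a5) - a5 / (1 + a4 * a5) * V - I) / (1 - a4 * (a5 / (1 + a4 * a5)))
      = a1 + a2 - a5 * (V + a4 * I) - I := by
  rw [one_sub_mul_div_eq hD]
  field_simp
  ring

theorem a2_recovery_from_theta
    (a1 a2 a3 a4 a5 b1 b3 θ1 θ2 θ3 θ4 : ℝ)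
    (ha1 : 0 < a1) (ha2 : 0 < a2) (ha3 : 0 < a3) (ha4 : 0 < a4) (ha5 : 0 < a5)
    (hb1 : b1 = (a1 + a2) / (1 + a4 * a5))
    (hb3 : b3 = a5 / (1 + a4 * a5))
    (hθ1 : θ1 = a3 / (1 + a3 * a4 * b1))
    (hθ2 : θ2 = (a3 * b1 + b3) / (1 + a3 * a4 * b1))
    (hθ3 : θ3 = a3 * b3 / (1 + a3 * a4 * b1))
    (hθ4 : θ4 = a3 * a4 / (1 + a3 * a4 * b1))
    (V I : ℝ)
    (hiv : I = a1 - a2 * (Real.exp (a3 * (V + a4 * I)) - 1) - a5 * (V + a4 * I)) :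
    a2 = (θ1 ^ 2 * I + θ1 * θ3 * V
            + θ1 ^ 2 * (θ1 * θ2 - θ3) / (θ3 * θ4 - θ1 ^ 2))
          * Real.exp ((θ3 * θ4 - θ1 ^ 2) / (θ1 - θ2 * θ4) * (V + θ4 / θ1 * I))
          / (θ3 * θ4 - θ1 ^ 2) := by
  have hD : 0 < 1 + a4 * a5 := by positivity
  have hE : 0 < 1 + a3 * a4 * b1 := by rw [hb1]; positivity
  have hc : 1 - a4 * b3 ≠ 0 := by
    rw [hb3, one_sub_mul_div_eq hD.ne']; positivity
  have hexp : a2 * Real.exp (a3 * (V + a4 * I)) = a1 + a2 - a5 * (V + a4 * I) - I := by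
    linear_combination hiv
  rw [theta4_div_theta1 ha3.ne' hE.ne' hθ1 hθ4,
    theta_exponent_ratio ha3.ne' hE.ne' hc hθ1 hθ2 hθ3 hθ4, mul_div_right_comm,
    theta_prefactor ha3.ne' hE.ne' hc hθ1 hθ2 hθ3 hθ4, hb1, hb3, reduced_current_eq hD.ne',
    ← hexp, neg_mul, Real.exp_neg, mul_inv_cancel_right₀ (Real.exp_pos _).ne']
end

section
/- Let a3, a4 ∈ ℝ, b1, b2, b3 ∈ ℝ with b2 ≠ 0, define F(V, I) = b1 − b2·exp(a3·(V + a4·I)) − b3·V and h(V, I) = b1 − b2·(1 + a3·V)·exp(a3·(V + a4·I)) − 2·b3·V. If V, I ∈ ℝ satisfy 1 + a3·V ≠ 0, h(V, I) = 0 and I = F(V, I), then I = (2·b3·V − b1)/(1 + a3·V) + b1 − b3·V. -/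
theorem mpp_current_relation
    (a3 a4 b1 b2 b3 : ℝ) (hb2 : b2 ≠ 0)
    (V I : ℝ)
    (hden : 1 + a3 * V ≠ 0)
    (hh : b1 - b2 * (1 + a3 * V) * Real.exp (a3 * (V + a4 * I)) - 2 * b3 * V = 0)
    (hF : I = b1 - b2 * Real.exp (a3 * (V + a4 * I)) - b3 * V) :
    I = (2 * b3 * V - b1) / (1 + a3 * V) + b1 - b3 * V := by
  have hE : b2 * Real.exp (a3 * (V + a4 * I)) = (b1 - 2 * b3 * V) / (1 + a3 * V) := by
    field_simp
    linarith [hh]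
  rw [hF, hE]
  field_simp
  ring
end

section
/- Let a1, …, a5 > 0, b1 = (a1 + a2)/(1 + a4·a5), b2 = a2/(1 + a4·a5), b3 = a5/(1 + a4·a5), and define g(V) = (2·b3·V − b1)/(1 + a3·V) + b1 − b3·V and H(V) = b1 − b2·(1 + a3·V)·exp(a3·(V + a4·g(V))) − 2·b3·V. Then H is strictly decreasing on the interval (0, ∞); in particular, for every V > 0, H is differentiable at V with H′(V) < 0. -/
/-!
Writing `u(V) = a3 (V + a4 g(V))`, the chain rule gives
`H'(V) = -b2 a3 e^{u(V)} (1 + (1 + a3 V)(1 + a4 g'(V))) - 2 b3`, with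
`g'(V) = (2 b3 + a3 b1)/(1 + a3 V)^2 - b3`. Since `a4 b3 = a4 a5/(1 + a4 a5) < 1`, the factor
`1 + a4 g'(V)` is positive, so every term of `H'(V)` is negative for `V > 0`.
-/

open Real

noncomputable section

def mppCurrent (a3 b1 b3 V : ℝ) : ℝ :=
  (2 * b3 * V - b1) / (1 + a3 * V) + b1 - b3 * V

def powerDerivAlongMpp (a3 a4 b1 b2 b3 V : ℝ) : ℝ :=
  b1 - b2 * (1 + a3 * V) * exp (a3 * (V + a4 * mppCurrent a3 b1 b3 V)) - 2 * b3 * V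

end

section

variable {a3 a4 b1 b2 b3 V : ℝ}

theorem hasDerivAt_mppCurrent (hV : 1 + a3 * V ≠ 0) :
    HasDerivAt (mppCurrent a3 b1 b3) ((2 * b3 + a3 * b1) / (1 + a3 * V) ^ 2 - b3) V := by
  have hnum : HasDerivAt (fun V : ℝ => 2 * b3 * V - b1) (2 * b3) V := by
    simpa using ((hasDerivAt_id V).const_mul (2 * b3)).sub_const b1
  have hden : HasDerivAt (fun V : ℝ => 1 + a3 * V) a3 V := by
    simpa using ((hasDerivAt_id V).const_mul a3).const_add 1
  exact (((hnum.div hden hV).add_const b1).sub ((hasDerivAt_id' V).const_mul b3)).congr_deriv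
    (by field_simp; ring)

theorem hasDerivAt_powerDerivAlongMpp (hV : 1 + a3 * V ≠ 0) :
    HasDerivAt (powerDerivAlongMpp a3 a4 b1 b2 b3)
      (-(b2 * a3 * exp (a3 * (V + a4 * mppCurrent a3 b1 b3 V)) *
          (1 + (1 + a3 * V) * (1 + a4 * ((2 * b3 + a3 * b1) / (1 + a3 * V) ^ 2 - b3))))
        - 2 * b3) V := by
  have hlin : HasDerivAt (fun V : ℝ => 1 + a3 * V) a3 V := by
    simpa using ((hasDerivAt_id V).const_mul a3).const_add 1
  have hexp : HasDerivAt (fun V => exp (a3 * (V + a4 * mppCurrent a3 b1 b3 V)))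
      (exp (a3 * (V + a4 * mppCurrent a3 b1 b3 V)) *
        (a3 * (1 + a4 * ((2 * b3 + a3 * b1) / (1 + a3 * V) ^ 2 - b3)))) V :=
    (((hasDerivAt_id' V).add ((hasDerivAt_mppCurrent hV).const_mul a4)).const_mul a3).exp
  exact (((hasDerivAt_const V b1).sub ((hlin.const_mul b2).mul hexp)).sub
    ((hasDerivAt_id' V).const_mul (2 * b3))).congr_deriv (by ring)

theorem powerDerivAlongMpp_hasDerivAt_neg (hb2 : 0 < b2) (ha3 : 0 < a3) (ha4 : 0 ≤ a4)
    (hb1 : 0 ≤ b1) (hb3 : 0 ≤ b3) (ha4b3 : a4 * b3 < 1) (hV : 0 < V) :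
    ∃ d < 0, HasDerivAt (powerDerivAlongMpp a3 a4 b1 b2 b3) d V := by
  have hE : 0 < 1 + a3 * V := by positivity
  refine ⟨_, ?_, hasDerivAt_powerDerivAlongMpp (a4 := a4) (b2 := b2) hE.ne'⟩
  have hslope : 0 < 1 + a4 * ((2 * b3 + a3 * b1) / (1 + a3 * V) ^ 2 - b3) := by
    have : 0 ≤ a4 * ((2 * b3 + a3 * b1) / (1 + a3 * V) ^ 2) := by positivity
    nlinarith
  have : 0 < b2 * a3 * exp (a3 * (V + a4 * mppCurrent a3 b1 b3 V)) *
      (1 + (1 + a3 * V) * (1 + a4 * ((2 * b3 + a3 * b1) / (1 + a3 * V) ^ 2 - b3))) := by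
    positivity
  linarith

theorem strictAntiOn_Ioi_of_hasDerivAt_neg {f : ℝ → ℝ} {a : ℝ}
    (hf : ∀ x, a < x → ∃ d < 0, HasDerivAt f d x) :
    StrictAntiOn f (Set.Ioi a) ∧ ∀ x : ℝ, a < x → DifferentiableAt ℝ f x ∧ deriv f x < 0 := by
  have hderiv : ∀ x, a < x → deriv f x < 0 := fun x hx => by
    obtain ⟨d, hd, hfd⟩ := hf x hx
    exact hfd.deriv ▸ hd
  have hdiff : ∀ x, a < x → DifferentiableAt ℝ f x := fun x hx =>
    differentiableAt_of_deriv_ne_zero (hderiv x hx).ne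
  refine ⟨strictAntiOn_of_deriv_neg (convex_Ioi a)
    (fun x hx => (hdiff x hx).continuousAt.continuousWithinAt) ?_,
    fun x hx => ⟨hdiff x hx, hderiv x hx⟩⟩
  rw [interior_Ioi]
  exact hderiv

end

theorem H_strictly_decreasing
    (a1 a2 a3 a4 a5 b1 b2 b3 : ℝ)
    (ha1 : 0 < a1) (ha2 : 0 < a2) (ha3 : 0 < a3) (ha4 : 0 < a4) (ha5 : 0 < a5)
    (hb1 : b1 = (a1 + a2) / (1 + a4 * a5))
    (hb2 : b2 = a2 / (1 + a4 * a5))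
    (hb3 : b3 = a5 / (1 + a4 * a5))
    (g H : ℝ → ℝ)
    (hg : ∀ V, g V = (2 * b3 * V - b1) / (1 + a3 * V) + b1 - b3 * V)
    (hH : ∀ V, H V = b1 - b2 * (1 + a3 * V) * Real.exp (a3 * (V + a4 * g V)) - 2 * b3 * V) :
    StrictAntiOn H (Set.Ioi 0) ∧
    ∀ V : ℝ, 0 < V → DifferentiableAt ℝ H V ∧ deriv H V < 0 := by
  have hden : 0 < 1 + a4 * a5 := by positivity
  have hH' : H = powerDerivAlongMpp a3 a4 b1 b2 b3 := by
    ext V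
    rw [hH, hg]
    rfl
  have ha4b3 : a4 * b3 < 1 := by
    rw [hb3, ← mul_div_assoc, div_lt_one hden]
    linarith
  subst hH' hb1 hb2 hb3
  exact strictAntiOn_Ioi_of_hasDerivAt_neg fun V hV =>
    powerDerivAlongMpp_hasDerivAt_neg (by positivity) ha3 ha4.le (by positivity)
      (by positivity) ha4b3 hV
end

section
/- Let a1, …, a5 > 0, b1 = (a1 + a2)/(1 + a4·a5), b2 = a2/(1 + a4·a5), b3 = a5/(1 + a4·a5), g(V) = (2·b3·V − b1)/(1 + a3·V) + b1 − b3·V, and H(V) = b1 − b2·(1 + a3·V)·exp(a3·(V + a4·g(V))) − 2·b3·V. Then there exists a unique V* > 0 with H(V*) = 0. (Indeed H(0) = b1 − b2 = a1/(1 + a4·a5) > 0, H is strictly decreasing on (0, ∞), and H(V) → −∞ as V → ∞.) -/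
/-!
`H 0 = b1 - b2 > 0` and `H (b1 / (2 b3)) < 0`, so the intermediate value theorem gives a zero.
It is unique because `H` is strictly decreasing on `[0, ∞)`: the Möbius term of `g` is
increasing since `2 b3 + a3 b1 > 0`, and `a4 b3 ≤ 1` makes `V + a4 g V` increasing despite the
`- b3 V` in `g`, so `(1 + a3 V) exp (a3 (V + a4 g V))` is strictly increasing.
-/

open Set Real

theorem existsUnique_pos_eq_zero_of_strictAntiOn {f : ℝ → ℝ} {M : ℝ} (hM : 0 < M)
    (hcont : ContinuousOn f (Ici 0)) (hanti : StrictAntiOn f (Ici 0))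
    (hf0 : 0 < f 0) (hfM : f M < 0) : ∃! x, 0 < x ∧ f x = 0 := by
  obtain ⟨x, hx, hfx⟩ := intermediate_value_Ioo' hM.le (hcont.mono Icc_subset_Ici_self)
    ⟨hfM, hf0⟩
  refine ⟨x, ⟨hx.1, hfx⟩, fun y ⟨hy, hfy⟩ => ?_⟩
  exact hanti.injOn (mem_Ici.2 hy.le) (mem_Ici.2 hx.1.le) (hfy.trans hfx.symm)

theorem monotoneOn_sub_div_one_add_mul {p r s : ℝ} (h : 0 ≤ p + r * s) :
    MonotoneOn (fun x => (p * x - r) / (1 + s * x)) {x | 0 < 1 + s * x} := by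
  intro x (hx : 0 < 1 + s * x) y (hy : 0 < 1 + s * y) hxy
  rw [div_le_div_iff₀ hx hy]
  nlinarith [mul_nonneg h (sub_nonneg.2 hxy)]

theorem monotoneOn_add_mul_of_eq_div {a3 a4 b1 b3 : ℝ} {g : ℝ → ℝ} (ha3 : 0 ≤ a3)
    (ha4 : 0 ≤ a4) (hb1 : 0 ≤ b1) (hb3 : 0 ≤ b3) (hab : a4 * b3 ≤ 1)
    (hg : ∀ V, g V = (2 * b3 * V - b1) / (1 + a3 * V) + b1 - b3 * V) :
    MonotoneOn (fun V => V + a4 * g V) (Ici 0) := by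
  intro x (hx : 0 ≤ x) y (hy : 0 ≤ y) hxy
  have hq : ∀ {V : ℝ}, 0 ≤ V → 0 < 1 + a3 * V := fun hV => by positivity
  have hfrac := monotoneOn_sub_div_one_add_mul (p := 2 * b3) (r := b1) (s := a3) (by positivity)
    (hq hx) (hq hy) hxy
  simp only [hg]
  nlinarith [mul_le_mul_of_nonneg_left hfrac ha4]

theorem strictAntiOn_sub_mul_exp_sub {a3 b1 b2 b3 : ℝ} {φ : ℝ → ℝ} (ha3 : 0 < a3)
    (hb2 : 0 < b2) (hb3 : 0 ≤ b3) (hφ : MonotoneOn φ (Ici 0)) :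
    StrictAntiOn (fun V => b1 - b2 * (1 + a3 * V) * exp (a3 * φ V) - 2 * b3 * V) (Ici 0) := by
  intro x (hx : 0 ≤ x) y (hy : 0 ≤ y) hxy
  have hexp : exp (a3 * φ x) ≤ exp (a3 * φ y) := by
    gcongr; exact hφ hx hy hxy.le
  have hlin : 1 + a3 * x < 1 + a3 * y := by gcongr
  have hprod : (1 + a3 * x) * exp (a3 * φ x) < (1 + a3 * y) * exp (a3 * φ y) :=
    mul_lt_mul hlin hexp (exp_pos _) (by positivity)
  dsimp only
  nlinarith [mul_lt_mul_of_pos_left hprod hb2]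

theorem mpp_voltage_exists_unique
    (a1 a2 a3 a4 a5 b1 b2 b3 : ℝ)
    (ha1 : 0 < a1) (ha2 : 0 < a2) (ha3 : 0 < a3) (ha4 : 0 < a4) (ha5 : 0 < a5)
    (hb1 : b1 = (a1 + a2) / (1 + a4 * a5))
    (hb2 : b2 = a2 / (1 + a4 * a5))
    (hb3 : b3 = a5 / (1 + a4 * a5))
    (g H : ℝ → ℝ)
    (hg : ∀ V, g V = (2 * b3 * V - b1) / (1 + a3 * V) + b1 - b3 * V)
    (hH : ∀ V, H V = b1 - b2 * (1 + a3 * V) * Real.exp (a3 * (V + a4 * g V)) - 2 * b3 * V) :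
    ∃! Vstar : ℝ, 0 < Vstar ∧ H Vstar = 0 := by
  have hd : 0 < 1 + a4 * a5 := by positivity
  have hb1p : 0 < b1 := by rw [hb1]; positivity
  have hb2p : 0 < b2 := by rw [hb2]; positivity
  have hb3p : 0 < b3 := by rw [hb3]; positivity
  have hb21 : b2 < b1 := by rw [hb1, hb2]; gcongr; linarith
  have hab : a4 * b3 ≤ 1 := by rw [hb3, ← mul_div_assoc, div_le_one hd]; linarith
  have hgc : ContinuousOn g (Ici 0) := by
    rw [funext hg]
    fun_prop (disch := exact fun x (hx : 0 ≤ x) => by positivity)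
  have hHc : ContinuousOn H (Ici 0) := by rw [funext hH]; fun_prop
  have hanti : StrictAntiOn H (Ici 0) := by
    rw [funext hH]
    exact strictAntiOn_sub_mul_exp_sub ha3 hb2p hb3p.le
      (monotoneOn_add_mul_of_eq_div ha3.le ha4.le hb1p.le hb3p.le hab hg)
  refine existsUnique_pos_eq_zero_of_strictAntiOn (M := b1 / (2 * b3)) (by positivity)
    hHc hanti ?_ ?_
  · rw [hH, hg]; simpa using hb21
  · have hM : 2 * b3 * (b1 / (2 * b3)) = b1 := by field_simp
    rw [hH, hM, sub_sub_cancel_left, neg_neg_iff_pos]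
    positivity
end

section
/- Let f : ℝ → ℝ be strictly antitone on (0, ∞), let V* > 0 satisfy f(V*) = 0, and let γ > 0. Suppose x : ℝ → ℝ is differentiable with x(t) > 0 and x′(t) = γ·f(x(t)) for all t ≥ 0. Then x(t) → V* as t → ∞. -/
/-!
Along the trajectory, `(x - V*)²` is nonincreasing because `(y - V*) f(y) ≤ 0`, so once `x`
reaches `V*` it stays there, and otherwise (intermediate value theorem) it stays on one side of
`V*`. On the side above `V*` the solution decreases; if it stayed above some `b > V*` forever, its
derivative would be at most `γ f(b) < 0` and it would decrease linearly, crossing `b`. The side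
below `V*` is the mirror image under `x ↦ -x`, `f ↦ -f(-·)`.
-/

open Filter Set Topology

theorem AntitoneOn.sub_mul_nonpos_of_eq_zero {f : ℝ → ℝ} {s : Set ℝ} {V y : ℝ}
    (hf : AntitoneOn f s) (hV : V ∈ s) (hfV : f V = 0) (hy : y ∈ s) : (y - V) * f y ≤ 0 := by
  rcases le_total y V with hyV | hVy
  · exact mul_nonpos_of_nonpos_of_nonneg (sub_nonpos.2 hyV) (hfV ▸ hf hy hV hyV)
  · exact mul_nonpos_of_nonneg_of_nonpos (sub_nonneg.2 hVy) (hfV ▸ hf hV hy hVy)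

theorem tendsto_atBot_of_deriv_le_neg {x : ℝ → ℝ} {c : ℝ} (hc : 0 < c)
    (hx : Differentiable ℝ x) (h : ∀ᶠ t in atTop, deriv x t ≤ -c) : Tendsto x atTop atBot := by
  obtain ⟨a, ha⟩ := eventually_atTop.1 h
  have hbound : ∀ t ≥ a, x t ≤ x a + c * a - c * t := fun t ht => by
    have := (convex_Ici a).image_sub_le_mul_sub_of_deriv_le hx.continuous.continuousOn
      hx.differentiableOn (fun t ht => ha t (interior_subset ht)) a self_mem_Ici t ht ht
    linarith
  refine tendsto_atBot_mono' _ (eventually_atTop.2 ⟨a, hbound⟩) ?_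
  exact tendsto_atBot_add_const_left _ _ (tendsto_neg_atTop_atBot.comp
    (tendsto_id.const_mul_atTop hc))

section ScalarODE

variable {f x : ℝ → ℝ} {s : Set ℝ} {V γ : ℝ}

theorem antitoneOn_sq_sub_of_deriv_eq (hf : AntitoneOn f s) (hV : V ∈ s) (hfV : f V = 0)
    (hγ : 0 ≤ γ) (hx : Differentiable ℝ x) {a : ℝ}
    (h : ∀ t ≥ a, x t ∈ s ∧ deriv x t = γ * f (x t)) :
    AntitoneOn (fun t => (x t - V) ^ 2) (Ici a) := by
  have hW : ∀ t, HasDerivAt (fun t => (x t - V) ^ 2) (2 * (x t - V) * deriv x t) t := fun t => by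
    simpa using ((hx t).hasDerivAt.sub_const V).fun_pow 2
  refine antitoneOn_of_deriv_nonpos (convex_Ici a)
    (fun t _ => (hW t).continuousAt.continuousWithinAt)
    (fun t _ => (hW t).differentiableAt.differentiableWithinAt) fun t ht => ?_
  rw [interior_Ici] at ht
  obtain ⟨hxs, hdx⟩ := h t ht.le
  have hsign := hf.sub_mul_nonpos_of_eq_zero hV hfV hxs
  rw [(hW t).deriv, hdx]
  nlinarith [mul_nonpos_of_nonneg_of_nonpos hγ hsign]

theorem eventually_ge_or_eventually_le_of_deriv_eq (hf : AntitoneOn f s) (hV : V ∈ s)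
    (hfV : f V = 0) (hγ : 0 ≤ γ) (hx : Differentiable ℝ x) (hmem : ∀ᶠ t in atTop, x t ∈ s)
    (hx' : ∀ᶠ t in atTop, deriv x t = γ * f (x t)) :
    (∀ᶠ t in atTop, V ≤ x t) ∨ ∀ᶠ t in atTop, x t ≤ V := by
  obtain ⟨a, ha⟩ := eventually_atTop.1 (hmem.and hx')
  have hW := antitoneOn_sq_sub_of_deriv_eq hf hV hfV hγ hx ha
  by_cases hhit : ∃ t₀ ≥ a, x t₀ = V
  · obtain ⟨t₀, ht₀, hxt₀⟩ := hhit
    have hstay : ∀ t ≥ t₀, x t = V := fun t ht => by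
      have : (x t - V) ^ 2 ≤ 0 := by simpa [hxt₀] using hW ht₀ (ht₀.trans ht) ht
      exact sub_eq_zero.1 ((pow_eq_zero_iff two_ne_zero).1 (this.antisymm (sq_nonneg _)))
    exact Or.inl (eventually_atTop.2 ⟨t₀, fun t ht => (hstay t ht).ge⟩)
  · push Not at hhit
    have hside : (∀ t ≥ a, V ≤ x t) ∨ ∀ t ≥ a, x t ≤ V := by
      by_contra! ⟨⟨t₁, ht₁, hbelow⟩, ⟨t₂, ht₂, habove⟩⟩
      obtain ⟨t, ht, hxt⟩ := intermediate_value_uIcc hx.continuous.continuousOn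
        (mem_uIcc_of_le hbelow.le habove.le)
      exact hhit t ((le_min ht₁ ht₂).trans ht.1) hxt
    exact hside.imp (fun h => eventually_atTop.2 ⟨a, h⟩) fun h => eventually_atTop.2 ⟨a, h⟩

theorem tendsto_of_deriv_eq_of_eventually_ge (hs : s.OrdConnected) (hf : StrictAntiOn f s)
    (hV : V ∈ s) (hfV : f V = 0) (hγ : 0 < γ) (hx : Differentiable ℝ x)
    (hmem : ∀ᶠ t in atTop, x t ∈ s) (hge : ∀ᶠ t in atTop, V ≤ x t)
    (hx' : ∀ᶠ t in atTop, deriv x t = γ * f (x t)) : Tendsto x atTop (𝓝 V) := by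
  obtain ⟨a, ha⟩ := eventually_atTop.1 (hmem.and (hge.and hx'))
  have hanti : AntitoneOn x (Ici a) := by
    refine antitoneOn_of_deriv_nonpos (convex_Ici a) hx.continuous.continuousOn
      hx.differentiableOn fun t ht => ?_
    rw [interior_Ici] at ht
    obtain ⟨hxs, hVx, hdx⟩ := ha t ht.le
    rw [hdx]
    exact mul_nonpos_of_nonneg_of_nonpos hγ.le (hfV ▸ hf.antitoneOn hV hxs hVx)
  refine tendsto_order.2 ⟨fun b hb => hge.mono fun t ht => hb.trans_le ht, fun b hb => ?_⟩
  by_cases hreach : ∃ t₀ ≥ a, x t₀ < b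
  · obtain ⟨t₀, ht₀, hlt⟩ := hreach
    exact eventually_atTop.2 ⟨t₀, fun t ht => (hanti ht₀ (ht₀.trans ht) ht).trans_lt hlt⟩
  push Not at hreach
  have hbs : b ∈ s := hs.out hV (ha a le_rfl).1 ⟨hb.le, hreach a le_rfl⟩
  have hfb : f b < 0 := hfV ▸ hf hV hbs hb
  have hdecay : ∀ᶠ t in atTop, deriv x t ≤ -(γ * -f b) := eventually_atTop.2 ⟨a, fun t ht => by
    obtain ⟨hxs, -, hdx⟩ := ha t ht
    rw [hdx, mul_neg, neg_neg]
    exact mul_le_mul_of_nonneg_left (hf.antitoneOn hbs hxs (hreach t ht)) hγ.le⟩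
  have hdiverge := tendsto_atBot_of_deriv_le_neg (mul_pos hγ (neg_pos.2 hfb)) hx hdecay
  obtain ⟨t, hxt, ht⟩ :=
    ((hdiverge.eventually (eventually_lt_atBot b)).and (eventually_ge_atTop a)).exists
  exact absurd (hreach t ht) hxt.not_ge

theorem tendsto_of_deriv_eq_of_eventually_le (hs : s.OrdConnected) (hf : StrictAntiOn f s)
    (hV : V ∈ s) (hfV : f V = 0) (hγ : 0 < γ) (hx : Differentiable ℝ x)
    (hmem : ∀ᶠ t in atTop, x t ∈ s) (hle : ∀ᶠ t in atTop, x t ≤ V)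
    (hx' : ∀ᶠ t in atTop, deriv x t = γ * f (x t)) : Tendsto x atTop (𝓝 V) := by
  have hmirror := tendsto_of_deriv_eq_of_eventually_ge (f := fun y => -f (-y)) (x := -x)
    (s := Neg.neg ⁻¹' s) (V := -V) (hs.preimage_anti fun _ _ => neg_le_neg)
    (fun _ hy _ hz hyz => neg_lt_neg (hf hz hy (neg_lt_neg hyz))) (by simpa using hV)
    (by simp [hfV]) hγ hx.neg (hmem.mono fun t ht => by simpa using ht)
    (hle.mono fun t ht => neg_le_neg ht) (hx'.mono fun t ht => by simp [deriv.neg, ht])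
  simpa using hmirror.neg

end ScalarODE

theorem scalar_ode_convergence
    (f : ℝ → ℝ) (hf : StrictAntiOn f (Set.Ioi 0))
    (Vstar : ℝ) (hVstar : 0 < Vstar) (hfzero : f Vstar = 0)
    (γ : ℝ) (hγ : 0 < γ)
    (x : ℝ → ℝ) (hx : Differentiable ℝ x)
    (hpos : ∀ t ≥ (0:ℝ), 0 < x t)
    (hx' : ∀ t ≥ (0:ℝ), deriv x t = γ * f (x t)) :
    Tendsto x atTop (nhds Vstar) := by
  have hmem : ∀ᶠ t in atTop, x t ∈ Ioi 0 := eventually_atTop.2 ⟨0, hpos⟩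
  have hode : ∀ᶠ t in atTop, deriv x t = γ * f (x t) := eventually_atTop.2 ⟨0, hx'⟩
  rcases eventually_ge_or_eventually_le_of_deriv_eq hf.antitoneOn hVstar hfzero hγ.le hx hmem hode
    with hge | hle
  · exact tendsto_of_deriv_eq_of_eventually_ge ordConnected_Ioi hf hVstar hfzero hγ hx hmem hge hode
  · exact tendsto_of_deriv_eq_of_eventually_le ordConnected_Ioi hf hVstar hfzero hγ hx hmem hle hode
end

section
/- Let a1, …, a5 > 0, b1 = (a1 + a2)/(1 + a4·a5), b2 = a2/(1 + a4·a5), b3 = a5/(1 + a4·a5), g(V) = (2·b3·V − b1)/(1 + a3·V) + b1 − b3·V, and H(V) = b1 − b2·(1 + a3·V)·exp(a3·(V + a4·g(V))) − 2·b3·V, and let V* > 0 be the unique positive zero of H. Let γ_V > 0 and let x : ℝ → ℝ be differentiable with x(t) > 0 and x′(t) = γ_V·H(x(t)) for all t ≥ 0. Then x(t) → V* as t → ∞. -/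
/-!
`H` is positive at `0` and negative for large `V` (it lies below `b1 - 2 b3 V`), so by the
intermediate value theorem its unique positive zero `V*` separates `H > 0` from `H < 0` on
`[0, ∞)`. Hence `W = (x - V*)²` is a Lyapunov function: `W' = 2 γ_V (x - V*) H(x) ≤ 0`.
If `W` stayed above some `δ > 0`, the orbit would be confined to a compact set avoiding `V*`,
on which `W'` is bounded by a negative constant, forcing `W → -∞`.
-/

open Filter Set Topology

theorem tendsto_atBot_of_deriv_le_neg_s17 {f : ℝ → ℝ} {C : ℝ} (hC : C < 0)
    (hf : Differentiable ℝ f) (hf' : ∀ t ≥ 0, deriv f t ≤ C) : Tendsto f atTop atBot := by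
  have bound : ∀ t ≥ 0, f t ≤ f 0 + C * t := fun t ht => by
    have := (convex_Ici 0).image_sub_le_mul_sub_of_deriv_le hf.continuous.continuousOn
      hf.differentiableOn (fun s hs => hf' s (interior_Ici.subset hs).le) 0 self_mem_Ici t ht ht
    linarith
  exact tendsto_atBot_mono' _ ((eventually_ge_atTop 0).mono bound)
    (tendsto_atBot_add_const_left _ _ (tendsto_id.const_mul_atTop_of_neg hC))

theorem sub_mul_neg_of_unique_pos_zero {F : ℝ → ℝ} {v₀ : ℝ} (hF : ContinuousOn F (Ici 0))
    (hF₀ : 0 < F 0) (hF_atTop : ∀ᶠ v in atTop, F v < 0)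
    (huniq : ∀ v, 0 < v → F v = 0 → v = v₀) {v : ℝ} (hv : 0 ≤ v) (hne : v ≠ v₀) :
    (v - v₀) * F v < 0 := by
  have zero_pos : ∀ c, 0 ≤ c → F c = 0 → 0 < c := fun c hc hFc =>
    hc.lt_of_ne (by rintro rfl; exact hF₀.ne' hFc)
  rcases hne.lt_or_gt with hlt | hgt
  · refine mul_neg_of_neg_of_pos (sub_neg.2 hlt) (not_le.1 fun hFv => ?_)
    obtain ⟨c, hc, hFc⟩ := intermediate_value_Icc' hv (hF.mono Icc_subset_Ici_self)
      ⟨hFv, hF₀.le⟩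
    exact (hc.2.trans_lt hlt).ne (huniq c (zero_pos c hc.1 hFc) hFc)
  · refine mul_neg_of_pos_of_neg (sub_pos.2 hgt) (not_le.1 fun hFv => ?_)
    obtain ⟨w, hvw, hFw⟩ := (hF_atTop.and (eventually_ge_atTop v)).exists.imp fun _ h => h.symm
    obtain ⟨c, hc, hFc⟩ := intermediate_value_Icc' hvw
      (hF.mono fun s hs => hv.trans hs.1) ⟨hFw.le, hFv⟩
    exact (hgt.trans_le hc.1).ne' (huniq c (zero_pos c (hv.trans hc.1) hFc) hFc)

section AutonomousODE

variable {S : Set ℝ} {F x : ℝ → ℝ} {v₀ : ℝ}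

theorem deriv_sq_sub_of_deriv_eq (hx : Differentiable ℝ x) (hx' : ∀ t ≥ 0, deriv x t = F (x t))
    {t : ℝ} (ht : 0 ≤ t) : deriv (fun s => (x s - v₀) ^ 2) t = 2 * ((x t - v₀) * F (x t)) := by
  rw [(((hx t).hasDerivAt.sub_const v₀).fun_pow 2).deriv, hx' t ht]
  ring

theorem antitoneOn_sq_sub_of_deriv_eq_s17 (hsign : ∀ v ∈ S, v ≠ v₀ → (v - v₀) * F v < 0)
    (hx : Differentiable ℝ x) (hxS : ∀ t ≥ 0, x t ∈ S) (hx' : ∀ t ≥ 0, deriv x t = F (x t)) :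
    AntitoneOn (fun t => (x t - v₀) ^ 2) (Ici 0) := by
  have hW : Differentiable ℝ (fun t => (x t - v₀) ^ 2) := (hx.sub_const v₀).pow 2
  refine antitoneOn_of_deriv_nonpos (convex_Ici 0) hW.continuous.continuousOn
    hW.differentiableOn fun t ht => ?_
  have ht : 0 ≤ t := (interior_Ici.subset ht).le
  rw [deriv_sq_sub_of_deriv_eq hx hx' ht]
  rcases eq_or_ne (x t) v₀ with hxt | hxt
  · simp [hxt]
  · linarith [hsign _ (hxS t ht) hxt]

theorem exists_sq_sub_lt_of_deriv_eq (hS : IsClosed S) (hF : ContinuousOn F S)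
    (hsign : ∀ v ∈ S, v ≠ v₀ → (v - v₀) * F v < 0)
    (hx : Differentiable ℝ x) (hxS : ∀ t ≥ 0, x t ∈ S) (hx' : ∀ t ≥ 0, deriv x t = F (x t))
    {δ : ℝ} (hδ : 0 < δ) : ∃ t ≥ 0, (x t - v₀) ^ 2 < δ := by
  by_contra! hfar
  have hanti := antitoneOn_sq_sub_of_deriv_eq_s17 hsign hx hxS hx'
  set K := S ∩ (fun v => (v - v₀) ^ 2) ⁻¹' Icc δ ((x 0 - v₀) ^ 2)
  have hxK : ∀ t ≥ 0, x t ∈ K := fun t ht =>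
    ⟨hxS t ht, hfar t ht, hanti self_mem_Ici ht ht⟩
  have hK : IsCompact K := by
    refine Metric.isCompact_of_isClosed_isBounded (hS.inter (isClosed_Icc.preimage (by fun_prop)))
      (Metric.isBounded_closedBall (x := v₀) (r := |x 0 - v₀|).subset fun v hv => ?_)
    rw [Metric.mem_closedBall, Real.dist_eq, ← sq_le_sq₀ (abs_nonneg _) (abs_nonneg _),
      sq_abs, sq_abs]
    exact hv.2.2
  obtain ⟨m, hmK, hmax⟩ := hK.exists_isMaxOn (f := fun v => (v - v₀) * F v) ⟨x 0, hxK 0 le_rfl⟩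
    ((continuousOn_id.sub continuousOn_const).mul (hF.mono inter_subset_left))
  have hm_ne : m ≠ v₀ := by
    rintro rfl
    exact hδ.not_ge (by simpa using hmK.2.1)
  have hdrift := tendsto_atBot_of_deriv_le_neg_s17 (C := 2 * ((m - v₀) * F m))
    (by linarith [hsign m hmK.1 hm_ne])
    ((hx.sub_const v₀).fun_pow 2) fun t ht => by
      rw [deriv_sq_sub_of_deriv_eq hx hx' ht]
      linarith [show (x t - v₀) * F (x t) ≤ (m - v₀) * F m from hmax (hxK t ht)]
  obtain ⟨t, ht⟩ := (hdrift.eventually_lt_atBot 0).exists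
  exact (sq_nonneg _).not_gt ht

theorem tendsto_of_deriv_eq_of_sub_mul_neg (hS : IsClosed S) (hF : ContinuousOn F S)
    (hsign : ∀ v ∈ S, v ≠ v₀ → (v - v₀) * F v < 0)
    (hx : Differentiable ℝ x) (hxS : ∀ t ≥ 0, x t ∈ S) (hx' : ∀ t ≥ 0, deriv x t = F (x t)) :
    Tendsto x atTop (𝓝 v₀) := by
  have hanti := antitoneOn_sq_sub_of_deriv_eq_s17 hsign hx hxS hx'
  refine Metric.tendsto_atTop.2 fun ε hε => ?_
  obtain ⟨t₀, ht₀, hclose⟩ := exists_sq_sub_lt_of_deriv_eq hS hF hsign hx hxS hx' (pow_pos hε 2)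
  refine ⟨t₀, fun t ht => ?_⟩
  rw [Real.dist_eq, ← sq_lt_sq₀ (abs_nonneg _) hε.le, sq_abs]
  exact (hanti ht₀ (ht₀.trans ht) ht).trans_lt hclose

end AutonomousODE

namespace MPP

variable {a3 a4 b1 b2 b3 : ℝ} {g H : ℝ → ℝ}

theorem continuousOn_H (ha3 : 0 ≤ a3)
    (hg : ∀ V, g V = (2 * b3 * V - b1) / (1 + a3 * V) + b1 - b3 * V)
    (hH : ∀ V, H V = b1 - b2 * (1 + a3 * V) * Real.exp (a3 * (V + a4 * g V)) - 2 * b3 * V) :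
    ContinuousOn H (Ici 0) := by
  have hH' : H = fun V => b1 - b2 * (1 + a3 * V) *
      Real.exp (a3 * (V + a4 * ((2 * b3 * V - b1) / (1 + a3 * V) + b1 - b3 * V))) - 2 * b3 * V :=
    funext fun V => by rw [hH, hg]
  refine continuousOn_of_forall_continuousAt fun V (hV : 0 ≤ V) => ?_
  have hden : 1 + a3 * V ≠ 0 := by positivity
  rw [hH']
  fun_prop (disch := exact hden)

theorem H_zero_pos (hb : b2 < b1)
    (hg : ∀ V, g V = (2 * b3 * V - b1) / (1 + a3 * V) + b1 - b3 * V)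
    (hH : ∀ V, H V = b1 - b2 * (1 + a3 * V) * Real.exp (a3 * (V + a4 * g V)) - 2 * b3 * V) :
    0 < H 0 := by
  rw [hH, hg]
  simpa using hb

theorem eventually_H_neg (ha3 : 0 ≤ a3) (hb2 : 0 ≤ b2) (hb3 : 0 < b3)
    (hH : ∀ V, H V = b1 - b2 * (1 + a3 * V) * Real.exp (a3 * (V + a4 * g V)) - 2 * b3 * V) :
    ∀ᶠ V in atTop, H V < 0 := by
  filter_upwards [eventually_gt_atTop (max 0 (b1 / (2 * b3)))] with V hV
  have hV0 : 0 < V := (le_max_left _ _).trans_lt hV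
  have hb1 : b1 < 2 * b3 * V := by
    rw [← div_lt_iff₀' (by positivity)]
    exact (le_max_right _ _).trans_lt hV
  have : 0 ≤ b2 * (1 + a3 * V) * Real.exp (a3 * (V + a4 * g V)) := by positivity
  linarith [hH V]

end MPP

theorem mpp_observer_convergence_general
    (a1 a2 a3 a4 a5 b1 b2 b3 : ℝ)
    (ha1 : 0 < a1) (ha2 : 0 < a2) (ha3 : 0 < a3) (ha4 : 0 < a4) (ha5 : 0 < a5)
    (hb1 : b1 = (a1 + a2) / (1 + a4 * a5))
    (hb2 : b2 = a2 / (1 + a4 * a5))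
    (hb3 : b3 = a5 / (1 + a4 * a5))
    (g H : ℝ → ℝ)
    (hg : ∀ V, g V = (2 * b3 * V - b1) / (1 + a3 * V) + b1 - b3 * V)
    (hH : ∀ V, H V = b1 - b2 * (1 + a3 * V) * Real.exp (a3 * (V + a4 * g V)) - 2 * b3 * V)
    (Vstar : ℝ)
    (huniq : ∀ V : ℝ, 0 < V → H V = 0 → V = Vstar)
    (γV : ℝ) (hγV : 0 < γV)
    (x : ℝ → ℝ) (hx : Differentiable ℝ x)
    (hpos : ∀ t ≥ (0:ℝ), 0 < x t)
    (hx' : ∀ t ≥ (0:ℝ), deriv x t = γV * H (x t)) :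
    Tendsto x atTop (nhds Vstar) := by
  have hden : 0 < 1 + a4 * a5 := by positivity
  have hb2_lt_b1 : b2 < b1 := by
    rw [hb1, hb2]
    exact div_lt_div_of_pos_right (by linarith) hden
  have hHcont := MPP.continuousOn_H ha3.le hg hH
  have hsign : ∀ V ∈ Ici (0 : ℝ), V ≠ Vstar → (V - Vstar) * (γV * H V) < 0 := fun V hV hne => by
    rw [mul_left_comm]
    exact mul_neg_of_pos_of_neg hγV <| sub_mul_neg_of_unique_pos_zero hHcont
      (MPP.H_zero_pos hb2_lt_b1 hg hH)
      (MPP.eventually_H_neg ha3.le (by rw [hb2]; positivity) (by rw [hb3]; positivity) hH)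
      huniq hV hne
  exact tendsto_of_deriv_eq_of_sub_mul_neg isClosed_Ici (continuousOn_const.mul hHcont) hsign hx
    (fun t ht => (hpos t ht).le) hx'

theorem mpp_observer_convergence
    (a1 a2 a3 a4 a5 b1 b2 b3 : ℝ)
    (ha1 : 0 < a1) (ha2 : 0 < a2) (ha3 : 0 < a3) (ha4 : 0 < a4) (ha5 : 0 < a5)
    (hb1 : b1 = (a1 + a2) / (1 + a4 * a5))
    (hb2 : b2 = a2 / (1 + a4 * a5))
    (hb3 : b3 = a5 / (1 + a4 * a5))
    (g H : ℝ → ℝ)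
    (hg : ∀ V, g V = (2 * b3 * V - b1) / (1 + a3 * V) + b1 - b3 * V)
    (hH : ∀ V, H V = b1 - b2 * (1 + a3 * V) * Real.exp (a3 * (V + a4 * g V)) - 2 * b3 * V)
    (Vstar : ℝ) (hVstar : 0 < Vstar) (hzero : H Vstar = 0)
    (huniq : ∀ V : ℝ, 0 < V → H V = 0 → V = Vstar)
    (γV : ℝ) (hγV : 0 < γV)
    (x : ℝ → ℝ) (hx : Differentiable ℝ x)
    (hpos : ∀ t ≥ (0:ℝ), 0 < x t)
    (hx' : ∀ t ≥ (0:ℝ), deriv x t = γV * H (x t)) :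
    Tendsto x atTop (nhds Vstar) :=
  mpp_observer_convergence_general a1 a2 a3 a4 a5 b1 b2 b3 ha1 ha2 ha3 ha4 ha5 hb1 hb2 hb3 g H hg hH
    Vstar huniq γV hγV x hx hpos hx'
end
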